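/- arXiv:2008.06211 — 3 statements merged into one kernel-verified Lean document; each statement's English description precedes it below -/
import Mathlib

section
/- For a > 0, the double integral ∫₀^∞ ∫₀^z e^{-(a y² + z²)/2} dy dz equals (1/√a)·arctan(√a). -/
/-!
Substituting `y = z t` turns the inner integral into `∫₀¹ z e^{-(1 + a t²) z² / 2} dt`. After
swapping the order of integration, the inner integral in `z` is elementary and equals
`1 / (1 + a t²)`, and `∫₀¹ dt / (1 + a t²) = arctan (√a) / √a`.
-/

open MeasureTheory Real Set intervalIntegral

theorem integral_Ioi_mul_exp_neg_mul_sq {b : ℝ} (hb : 0 < b) :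
    ∫ r in Ioi (0 : ℝ), r * exp (-b * r ^ 2) = (2 * b)⁻¹ := by
  apply Complex.ofReal_injective
  rw [← integral_complex_ofReal]
  push_cast
  exact integral_mul_cexp_neg_mul_sq (by simpa using hb)

theorem integral_zero_eq_mul_integral_comp_mul (f : ℝ → ℝ) (z : ℝ) :
    ∫ y in (0 : ℝ)..z, f y = z * ∫ t in (0 : ℝ)..1, f (z * t) := by
  rw [mul_integral_comp_mul_left, mul_zero, mul_one]

theorem integral_inv_one_add_mul_sq {a : ℝ} (ha : 0 < a) (x : ℝ) :
    ∫ t in (0 : ℝ)..x, (1 + a * t ^ 2)⁻¹ = arctan (√a * x) / √a := by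
  have hsqrt : √a ≠ 0 := (sqrt_pos.mpr ha).ne'
  have hsq (t : ℝ) : a * t ^ 2 = (√a * t) ^ 2 := by rw [mul_pow, sq_sqrt ha.le]
  simp_rw [hsq]
  rw [integral_comp_mul_left (fun u => (1 + u ^ 2)⁻¹) hsqrt, integral_inv_one_add_sq]
  simp [div_eq_inv_mul]

theorem integrable_mul_exp_neg_one_add_mul_sq_mul_sq {a : ℝ} (ha : 0 ≤ a) (ν : Measure ℝ)
    [IsFiniteMeasure ν] :
    Integrable (Function.uncurry fun z t => z * exp (-((1 + a * t ^ 2) / 2) * z ^ 2))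
      ((volume : Measure ℝ).prod ν) := by
  have hdom : Integrable (fun p : ℝ × ℝ => p.1 * exp (-(1 / 2) * p.1 ^ 2) * 1)
      ((volume : Measure ℝ).prod ν) :=
    (integrable_mul_exp_neg_mul_sq one_half_pos).mul_prod (integrable_const 1)
  refine hdom.mono (by fun_prop) (Filter.Eventually.of_forall fun p => ?_)
  simp only [Function.uncurry, mul_one, norm_mul, norm_eq_abs, abs_exp]
  gcongr
  nlinarith [mul_nonneg ha (sq_nonneg p.2), sq_nonneg p.1]

theorem stmt_0 (a : ℝ) (ha : 0 < a) :
    ∫ z in Set.Ioi (0:ℝ), ∫ y in (0:ℝ)..z, Real.exp (-(a * y ^ 2 + z ^ 2) / 2)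
      = (1 / Real.sqrt a) * Real.arctan (Real.sqrt a) := by
  calc ∫ z in Ioi (0 : ℝ), ∫ y in (0 : ℝ)..z, exp (-(a * y ^ 2 + z ^ 2) / 2)
      = ∫ z in Ioi (0 : ℝ), ∫ t in Ioc (0 : ℝ) 1, z * exp (-((1 + a * t ^ 2) / 2) * z ^ 2) := by
        refine setIntegral_congr_fun measurableSet_Ioi fun z _ => ?_
        rw [integral_zero_eq_mul_integral_comp_mul, ← intervalIntegral.integral_const_mul,
          integral_of_le zero_le_one]
        ring_nf
    _ = ∫ t in Ioc (0 : ℝ) 1, ∫ z in Ioi (0 : ℝ), z * exp (-((1 + a * t ^ 2) / 2) * z ^ 2) :=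
        integral_integral_swap <|
          (integrable_mul_exp_neg_one_add_mul_sq_mul_sq ha.le _).mono_measure
            (Measure.prod_mono Measure.restrict_le_self le_rfl)
    _ = ∫ t in (0 : ℝ)..1, (1 + a * t ^ 2)⁻¹ := by
        rw [integral_of_le zero_le_one]
        refine setIntegral_congr_fun measurableSet_Ioc fun t _ => ?_
        rw [integral_Ioi_mul_exp_neg_mul_sq (by positivity)]
        ring
    _ = 1 / √a * arctan √a := by
        rw [integral_inv_one_add_mul_sq ha, mul_one, div_eq_inv_mul, one_div]
end

section
/- Let (f₁, f₂) be a centered Gaussian vector with f₁, f₂ each standard Gaussian and correlation ρ ∈ [0,1], and let a ∈ (0,1]. Then E[min(|f₁|, a|f₂|)] = (2(1+a) − √(1+a²+2aρ) − √(1+a²−2aρ)) / √(2π). -/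
open MeasureTheory ProbabilityTheory Real
open scoped NNReal

/-!
Pointwise, `min |x| |z| = |x| + |z| - (|x + z| + |x - z|) / 2`. With `z = a f₂`, each of the four
absolute values is that of a centred Gaussian: `f₁`, `f₂` of variance `1`, and `f₁ ± a f₂` of
variance `1 + a² ± 2aρ`. Taking expectations with `E|N(0, v)| = 2√v / √(2π)` gives the formula.
-/

lemma integral_abs_mul_exp_neg_mul_sq {b : ℝ} (hb : 0 < b) :
    ∫ x : ℝ, |x| * exp (-b * x ^ 2) = b⁻¹ := by
  have hsq : ∀ x : ℝ, |x| * exp (-b * x ^ 2) = |x| ^ (1 : ℝ) * exp (-b * |x| ^ (2 : ℝ)) := by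
    intro x; rw [rpow_one, rpow_two, sq_abs]
  simp_rw [hsq]
  rw [integral_comp_abs (f := fun x => x ^ (1 : ℝ) * exp (-b * x ^ (2 : ℝ))),
    integral_rpow_mul_exp_neg_mul_rpow two_pos (by norm_num) hb]
  norm_num [Gamma_one, rpow_neg_one]
  ring

namespace ProbabilityTheory

lemma integral_abs_gaussianReal_zero_one :
    ∫ x, |x| ∂gaussianReal 0 1 = 2 / √(2 * π) := by
  have hpdf : ∀ x,
      gaussianPDFReal 0 1 x • |x| = (√(2 * π))⁻¹ * (|x| * exp (-(1 / 2) * x ^ 2)) := by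
    intro x; simp only [gaussianPDFReal, smul_eq_mul, NNReal.coe_one]; ring_nf
  rw [integral_gaussianReal_eq_integral_smul one_ne_zero]
  simp_rw [hpdf]
  rw [integral_const_mul, integral_abs_mul_exp_neg_mul_sq one_half_pos]
  ring

lemma integral_abs_gaussianReal (v : ℝ≥0) :
    ∫ x, |x| ∂gaussianReal 0 v = 2 * √v / √(2 * π) := by
  have hmap : (gaussianReal 0 1).map (√v * ·) = gaussianReal 0 v := by
    rw [gaussianReal_map_const_mul, mul_zero, mul_one]
    congr 1
    exact NNReal.eq (sq_sqrt v.2)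
  rw [← hmap, integral_map (by fun_prop) (by fun_prop)]
  simp_rw [abs_mul, abs_of_nonneg (sqrt_nonneg _)]
  rw [integral_const_mul, integral_abs_gaussianReal_zero_one]
  ring

variable {Ω : Type*} [MeasurableSpace Ω] {P : Measure Ω} {X : Ω → ℝ} {μ : ℝ} {v : ℝ≥0}

lemma hasLaw_gaussianReal_of_map_eq (h : P.map X = gaussianReal μ v) :
    HasLaw X (gaussianReal μ v) P :=
  ⟨.of_map_ne_zero (h ▸ IsProbabilityMeasure.ne_zero _), h⟩

lemma HasLaw.memLp_gaussianReal (hX : HasLaw X (gaussianReal μ v) P) (p : ℝ≥0) :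
    MemLp X p P := by
  have h := memLp_id_gaussianReal (μ := μ) (v := v) p
  rwa [← hX.map_eq, memLp_map_measure_iff aestronglyMeasurable_id hX.aemeasurable] at h

lemma HasLaw.integral_abs_gaussianReal (hX : HasLaw X (gaussianReal 0 v) P) :
    ∫ ω, |X ω| ∂P = 2 * √v / √(2 * π) :=
  (hX.integral_comp continuous_abs.aestronglyMeasurable).trans
    (ProbabilityTheory.integral_abs_gaussianReal v)

lemma HasLaw.integrable_abs (hX : HasLaw X (gaussianReal μ v) P) :
    Integrable (fun ω => |X ω|) P :=
  (memLp_one_iff_integrable.1 (by simpa using hX.memLp_gaussianReal 1)).abs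

lemma HasLaw.variance_gaussianReal (hX : HasLaw X (gaussianReal μ v) P) :
    Var[X; P] = v :=
  hX.variance_eq.trans variance_id_gaussianReal

lemma HasLaw.integral_gaussianReal (hX : HasLaw X (gaussianReal μ v) P) :
    ∫ ω, X ω ∂P = μ :=
  hX.integral_eq.trans integral_id_gaussianReal

lemma variance_eq_of_hasLaw_linear_comb [IsProbabilityMeasure P] {Y : Ω → ℝ} {v₁ v₂ : ℝ≥0}
    (c d : ℝ) (hX : HasLaw X (gaussianReal 0 v₁) P) (hY : HasLaw Y (gaussianReal 0 v₂) P)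
    (hZ : HasLaw (fun ω => c * X ω + d * Y ω) (gaussianReal 0 v) P) :
    (v : ℝ) = c ^ 2 * v₁ + d ^ 2 * v₂ + 2 * c * d * ∫ ω, X ω * Y ω ∂P := by
  have hX2 := hX.memLp_gaussianReal 2
  have hY2 := hY.memLp_gaussianReal 2
  have hcov : cov[X, Y; P] = ∫ ω, X ω * Y ω ∂P := by
    rw [covariance_eq_sub (by simpa using hX2) (by simpa using hY2), hX.integral_gaussianReal,
      hY.integral_gaussianReal, mul_zero, sub_zero]
    rfl
  rw [← hZ.variance_gaussianReal,
    variance_fun_add (by simpa using hX2.const_mul c) (by simpa using hY2.const_mul d),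
    variance_const_mul, variance_const_mul, covariance_const_mul_left, covariance_const_mul_right,
    hX.variance_gaussianReal, hY.variance_gaussianReal, hcov]
  ring

end ProbabilityTheory

lemma min_abs_mul_abs_eq {a : ℝ} (ha : 0 ≤ a) (x y : ℝ) :
    min |x| (a * |y|) = |x| + a * |y| - (|x + a * y| + |x - a * y|) / 2 := by
  rw [← abs_of_nonneg ha, ← abs_mul, abs_of_nonneg ha]
  rcases abs_cases x with ⟨hx, hx'⟩ | ⟨hx, hx'⟩ <;>
    rcases abs_cases (a * y) with ⟨hy, hy'⟩ | ⟨hy, hy'⟩ <;>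
    rcases abs_cases (x + a * y) with ⟨hp, hp'⟩ | ⟨hp, hp'⟩ <;>
    rcases abs_cases (x - a * y) with ⟨hq, hq'⟩ | ⟨hq, hq'⟩ <;>
    rcases min_cases |x| |a * y| with ⟨hm, hm'⟩ | ⟨hm, hm'⟩ <;>
    linarith

theorem stmt_11_general {Ω : Type*} [MeasurableSpace Ω] (P : Measure Ω) [IsProbabilityMeasure P]
    (f₁ f₂ : Ω → ℝ)
    (hgauss : ∀ c d : ℝ, ∃ v : NNReal,
      Measure.map (fun ω => c * f₁ ω + d * f₂ ω) P = gaussianReal 0 v)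
    (h₁ : Measure.map f₁ P = gaussianReal 0 1)
    (h₂ : Measure.map f₂ P = gaussianReal 0 1)
    (ρ : ℝ)
    (hcov : ∫ ω, f₁ ω * f₂ ω ∂P = ρ)
    (a : ℝ) (ha : a ∈ Set.Ioc (0:ℝ) 1) :
    ∫ ω, min (|f₁ ω|) (a * |f₂ ω|) ∂P
      = (2 * (1 + a) - Real.sqrt (1 + a ^ 2 + 2 * a * ρ)
          - Real.sqrt (1 + a ^ 2 - 2 * a * ρ)) / Real.sqrt (2 * Real.pi) := by
  have hX₁ := hasLaw_gaussianReal_of_map_eq h₁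
  have hX₂ := hasLaw_gaussianReal_of_map_eq h₂
  obtain ⟨vp, hYp⟩ := hgauss 1 a
  obtain ⟨vm, hYm⟩ := hgauss 1 (-a)
  replace hYp := hasLaw_gaussianReal_of_map_eq hYp
  replace hYm := hasLaw_gaussianReal_of_map_eq hYm
  have hvp : (vp : ℝ) = 1 + a ^ 2 + 2 * a * ρ := by
    rw [variance_eq_of_hasLaw_linear_comb 1 a hX₁ hX₂ hYp, hcov]; push_cast; ring
  have hvm : (vm : ℝ) = 1 + a ^ 2 - 2 * a * ρ := by
    rw [variance_eq_of_hasLaw_linear_comb 1 (-a) hX₁ hX₂ hYm, hcov]; push_cast; ring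
  have hmin : ∀ ω, min |f₁ ω| (a * |f₂ ω|)
      = |f₁ ω| + a * |f₂ ω| - (|1 * f₁ ω + a * f₂ ω| + |1 * f₁ ω + -a * f₂ ω|) / 2 := by
    intro ω
    rw [min_abs_mul_abs_eq ha.1.le, one_mul, neg_mul, ← sub_eq_add_neg]
  simp_rw [hmin]
  rw [integral_sub (hX₁.integrable_abs.fun_add (hX₂.integrable_abs.const_mul a))
      ((hYp.integrable_abs.fun_add hYm.integrable_abs).div_const 2),
    integral_add hX₁.integrable_abs (hX₂.integrable_abs.const_mul a),
    integral_div, integral_add hYp.integrable_abs hYm.integrable_abs, integral_const_mul,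
    hX₁.integral_abs_gaussianReal, hX₂.integral_abs_gaussianReal,
    hYp.integral_abs_gaussianReal, hYm.integral_abs_gaussianReal, hvp, hvm]
  simp only [NNReal.coe_one, sqrt_one]
  ring

theorem stmt_11 {Ω : Type*} [MeasurableSpace Ω] (P : Measure Ω) [IsProbabilityMeasure P]
    (f₁ f₂ : Ω → ℝ) (hm₁ : Measurable f₁) (hm₂ : Measurable f₂)
    (hgauss : ∀ c d : ℝ, ∃ v : NNReal,
      Measure.map (fun ω => c * f₁ ω + d * f₂ ω) P = gaussianReal 0 v)
    (h₁ : Measure.map f₁ P = gaussianReal 0 1)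
    (h₂ : Measure.map f₂ P = gaussianReal 0 1)
    (ρ : ℝ) (hρ : ρ ∈ Set.Icc (0:ℝ) 1)
    (hcov : ∫ ω, f₁ ω * f₂ ω ∂P = ρ)
    (a : ℝ) (ha : a ∈ Set.Ioc (0:ℝ) 1) :
    ∫ ω, min (|f₁ ω|) (a * |f₂ ω|) ∂P
      = (2 * (1 + a) - Real.sqrt (1 + a ^ 2 + 2 * a * ρ)
          - Real.sqrt (1 + a ^ 2 - 2 * a * ρ)) / Real.sqrt (2 * Real.pi) :=
  stmt_11_general P f₁ f₂ hgauss h₁ h₂ ρ hcov a ha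
end

section
/- For α, β > 0 and γ real with αβ − γ² > 0 and σ² > 0, the integral J := ∫₀^∞ (∫₀^y x·e^{-(αx²+βy²+2γxy)/(2σ²)} dx) dy equals (√(2π)·σ³/2)·(β/(αβ−γ²))·(1/√β − (β+γ)/(β·√(α+β+2γ))). -/
open MeasureTheory Real Set Filter Topology

/-!
Write `K(x, y) = exp (-(α x² + β y² + 2γ x y) / (2σ²))`, `J = ∬_{0 < x ≤ y} x K` and
`L = ∬_{0 < x ≤ y} y K`. Since `(α x + γ y) K = ∂ₓ(-σ² K)` and `(β y + γ x) K = ∂_y(-σ² K)`,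
integrating the first in `x` over `[0, y]` and the second in `y` over `(x, ∞)` gives
`α J + γ L = σ² ∫₀^∞ (K(0, y) - K(y, y)) dy` and `β L + γ J = σ² ∫₀^∞ K(x, x) dx`,
two half-line Gaussian integrals. Eliminating `L` yields `J`. Fubini applies because positive
definiteness bounds `K(x, y)` by `exp (-k x²) exp (-k y²)` for some `k > 0`.
-/

def wedge (a : ℝ) : Set (ℝ × ℝ) := {p | a < p.1 ∧ p.1 ≤ p.2}

lemma measurableSet_wedge (a : ℝ) : MeasurableSet (wedge a) :=
  (measurableSet_lt measurable_const measurable_fst).inter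
    (measurableSet_le measurable_fst measurable_snd)

section
variable {E : Type*} [NormedAddCommGroup E] [NormedSpace ℝ E] {f : ℝ × ℝ → E} {a : ℝ}

lemma setIntegral_wedge_eq_integral_Ioi_intervalIntegral (hf : IntegrableOn f (wedge a)) :
    ∫ p in wedge a, f p = ∫ y in Ioi a, ∫ x in a..y, f (x, y) := by
  have hsection : ∀ y, ∫ x, (wedge a).indicator f (x, y)
      = (Ioi a).indicator (fun y => ∫ x in a..y, f (x, y)) y := by
    intro y
    by_cases hy : y ∈ Ioi a
    · rw [indicator_of_mem hy, intervalIntegral.integral_of_le (le_of_lt hy),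
        ← integral_indicator measurableSet_Ioc]
      congr 1 with x
    · rw [indicator_of_notMem hy]
      refine integral_eq_zero_of_ae (ae_of_all _ fun x => indicator_of_notMem ?_ _)
      exact fun h => hy (h.1.trans_le h.2)
  rw [← integral_indicator (measurableSet_wedge a), Measure.volume_eq_prod,
    integral_prod_symm _ ((integrable_indicator_iff (measurableSet_wedge a)).2 hf)]
  simp_rw [hsection]
  exact integral_indicator measurableSet_Ioi

lemma setIntegral_wedge_eq_integral_Ioi_Ioi (hf : IntegrableOn f (wedge a)) :
    ∫ p in wedge a, f p = ∫ x in Ioi a, ∫ y in Ioi x, f (x, y) := by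
  have hsection : ∀ x, ∫ y, (wedge a).indicator f (x, y)
      = (Ioi a).indicator (fun x => ∫ y in Ioi x, f (x, y)) x := by
    intro x
    by_cases hx : x ∈ Ioi a
    · rw [indicator_of_mem hx, ← integral_Ici_eq_integral_Ioi,
        ← integral_indicator measurableSet_Ici]
      congr 1 with y
      simp only [indicator, wedge, mem_ofPred_eq, mem_Ici, mem_Ioi.1 hx, true_and]
    · rw [indicator_of_notMem hx]
      exact integral_eq_zero_of_ae (ae_of_all _ fun y => indicator_of_notMem (fun h => hx h.1) _)
  rw [← integral_indicator (measurableSet_wedge a), Measure.volume_eq_prod,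
    integral_prod _ ((integrable_indicator_iff (measurableSet_wedge a)).2 hf)]
  simp_rw [hsection]
  exact integral_indicator measurableSet_Ioi

end

lemma integral_gaussian_Ioi_div_two_mul_sq {c σ : ℝ} (hc : 0 < c) (hσ : 0 < σ) :
    ∫ y in Ioi 0, exp (-(c / (2 * σ ^ 2)) * y ^ 2) = √(2 * π) * σ / (2 * √c) := by
  rw [integral_gaussian_Ioi, show π / (c / (2 * σ ^ 2)) = 2 * π * σ ^ 2 / c by field_simp,
    sqrt_div' _ hc.le, sqrt_mul' _ (sq_nonneg σ), sqrt_sq hσ.le]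
  ring

section
variable {α β γ σ : ℝ}

lemma add_add_two_mul_pos (hα : 0 < α) (hβ : 0 < β) (hdet : γ ^ 2 < α * β) :
    0 < α + β + 2 * γ := by
  nlinarith [sq_nonneg (α - β), sq_nonneg (α + β + 2 * γ)]

lemma mul_sq_add_sq_le_quadForm (hα : 0 < α) (hβ : 0 < β) (x y : ℝ) :
    (α * β - γ ^ 2) / (α + β) * (x ^ 2 + y ^ 2) ≤ α * x ^ 2 + β * y ^ 2 + 2 * γ * x * y := by
  set D := (α * x ^ 2 + β * y ^ 2 + 2 * γ * x * y) * (α + β) - (α * β - γ ^ 2) * (x ^ 2 + y ^ 2)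
  have hA : 0 < α ^ 2 + γ ^ 2 := by positivity
  -- completing the square: the discriminant of `D` as a form in `x, y` is `-(αβ - γ²)²`
  have hsq : (α ^ 2 + γ ^ 2) * D
      = ((α ^ 2 + γ ^ 2) * x + γ * (α + β) * y) ^ 2 + ((α * β - γ ^ 2) * y) ^ 2 := by ring
  have hD : 0 ≤ D := nonneg_of_mul_nonneg_right (hsq ▸ by positivity) hA
  rw [div_mul_eq_mul_div, div_le_iff₀ (by linarith)]
  linarith

noncomputable def gaussKernel (α β γ σ : ℝ) (p : ℝ × ℝ) : ℝ :=
  exp (-(α * p.1 ^ 2 + β * p.2 ^ 2 + 2 * γ * p.1 * p.2) / (2 * σ ^ 2))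

lemma gaussKernel_pos (p : ℝ × ℝ) : 0 < gaussKernel α β γ σ p := exp_pos _

@[fun_prop]
lemma continuous_gaussKernel : Continuous (gaussKernel α β γ σ) := by
  unfold gaussKernel; fun_prop

lemma exists_gaussKernel_le (hα : 0 < α) (hβ : 0 < β) (hdet : γ ^ 2 < α * β) (hσ : σ ≠ 0) :
    ∃ k > 0, ∀ p : ℝ × ℝ, gaussKernel α β γ σ p ≤ exp (-k * p.1 ^ 2) * exp (-k * p.2 ^ 2) := by
  refine ⟨(α * β - γ ^ 2) / (α + β) / (2 * σ ^ 2), by have := sub_pos.2 hdet; positivity,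
    fun p => ?_⟩
  have hsum : -((α * β - γ ^ 2) / (α + β) / (2 * σ ^ 2)) * p.1 ^ 2
      + -((α * β - γ ^ 2) / (α + β) / (2 * σ ^ 2)) * p.2 ^ 2
      = -((α * β - γ ^ 2) / (α + β) * (p.1 ^ 2 + p.2 ^ 2)) / (2 * σ ^ 2) := by ring
  rw [← exp_add, gaussKernel, exp_le_exp, hsum, neg_div, neg_div]
  exact neg_le_neg
    (div_le_div_of_nonneg_right (mul_sq_add_sq_le_quadForm hα hβ _ _) (by positivity))

lemma integrable_fst_mul_gaussKernel (hα : 0 < α) (hβ : 0 < β) (hdet : γ ^ 2 < α * β)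
    (hσ : σ ≠ 0) : Integrable fun p : ℝ × ℝ => p.1 * gaussKernel α β γ σ p := by
  obtain ⟨k, hk, hle⟩ := exists_gaussKernel_le hα hβ hdet hσ
  refine ((integrable_mul_exp_neg_mul_sq hk).norm.mul_prod (integrable_exp_neg_mul_sq hk)).mono'
    (by fun_prop) (ae_of_all _ fun p => ?_)
  rw [norm_mul, norm_of_nonneg (gaussKernel_pos p).le, norm_mul, norm_of_nonneg (exp_pos _).le,
    mul_assoc]
  exact mul_le_mul_of_nonneg_left (hle p) (norm_nonneg _)

lemma integrable_snd_mul_gaussKernel (hα : 0 < α) (hβ : 0 < β) (hdet : γ ^ 2 < α * β)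
    (hσ : σ ≠ 0) : Integrable fun p : ℝ × ℝ => p.2 * gaussKernel α β γ σ p := by
  obtain ⟨k, hk, hle⟩ := exists_gaussKernel_le hα hβ hdet hσ
  refine ((integrable_exp_neg_mul_sq hk).mul_prod (integrable_mul_exp_neg_mul_sq hk).norm).mono'
    (by fun_prop) (ae_of_all _ fun p => ?_)
  rw [norm_mul, norm_of_nonneg (gaussKernel_pos p).le, norm_mul, norm_of_nonneg (exp_pos _).le,
    mul_left_comm]
  exact mul_le_mul_of_nonneg_left (hle p) (norm_nonneg _)

lemma integrable_linear_mul_gaussKernel (hα : 0 < α) (hβ : 0 < β) (hdet : γ ^ 2 < α * β)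
    (hσ : σ ≠ 0) (a b : ℝ) :
    Integrable fun p : ℝ × ℝ => (a * p.1 + b * p.2) * gaussKernel α β γ σ p := by
  refine ((integrable_fst_mul_gaussKernel hα hβ hdet hσ).const_mul a).add
    ((integrable_snd_mul_gaussKernel hα hβ hdet hσ).const_mul b) |>.congr
    (ae_of_all _ fun p => ?_)
  simp only [Pi.add_apply]
  ring

lemma gaussKernel_swap (x y : ℝ) : gaussKernel α β γ σ (x, y) = gaussKernel β α γ σ (y, x) := by
  unfold gaussKernel; ring_nf

lemma hasDerivAt_gaussKernel_fst (hσ : σ ≠ 0) (x y : ℝ) :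
    HasDerivAt (fun x => -σ ^ 2 * gaussKernel α β γ σ (x, y))
      ((α * x + γ * y) * gaussKernel α β γ σ (x, y)) x := by
  have hQ : HasDerivAt (fun x => α * x ^ 2 + β * y ^ 2 + 2 * γ * x * y)
      (2 * α * x + 2 * γ * y) x :=
    ((((hasDerivAt_pow 2 x).const_mul α).add_const (β * y ^ 2)).add
      (((hasDerivAt_id x).const_mul (2 * γ)).mul_const y)).congr_deriv (by norm_num; ring)
  refine (((hQ.neg.div_const (2 * σ ^ 2)).exp).const_mul (-σ ^ 2)).congr_deriv ?_
  rw [gaussKernel, Pi.neg_apply]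
  field_simp

lemma hasDerivAt_gaussKernel_snd (hσ : σ ≠ 0) (x y : ℝ) :
    HasDerivAt (fun y => -σ ^ 2 * gaussKernel α β γ σ (x, y))
      ((β * y + γ * x) * gaussKernel α β γ σ (x, y)) y := by
  simp only [gaussKernel_swap x]
  exact hasDerivAt_gaussKernel_fst hσ y x

lemma gaussKernel_zero_left (y : ℝ) :
    gaussKernel α β γ σ (0, y) = exp (-(β / (2 * σ ^ 2)) * y ^ 2) := by
  rw [gaussKernel]; ring_nf

lemma gaussKernel_diag (y : ℝ) :
    gaussKernel α β γ σ (y, y) = exp (-((α + β + 2 * γ) / (2 * σ ^ 2)) * y ^ 2) := by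
  rw [gaussKernel]; ring_nf

lemma integral_linear_mul_gaussKernel_fst (hσ : σ ≠ 0) (a b y : ℝ) :
    ∫ x in a..b, (α * x + γ * y) * gaussKernel α β γ σ (x, y)
      = σ ^ 2 * (gaussKernel α β γ σ (a, y) - gaussKernel α β γ σ (b, y)) := by
  rw [intervalIntegral.integral_eq_sub_of_hasDerivAt
    (fun x _ => hasDerivAt_gaussKernel_fst hσ x y)
    (Continuous.intervalIntegrable (by fun_prop) _ _)]
  ring

lemma integrable_gaussKernel_section (hα : 0 < α) (hβ : 0 < β) (hdet : γ ^ 2 < α * β)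
    (hσ : σ ≠ 0) (x : ℝ) : Integrable fun y => gaussKernel α β γ σ (x, y) := by
  obtain ⟨k, hk, hle⟩ := exists_gaussKernel_le hα hβ hdet hσ
  refine ((integrable_exp_neg_mul_sq hk).const_mul (exp (-k * x ^ 2))).mono' (by fun_prop)
    (ae_of_all _ fun y => ?_)
  rw [norm_of_nonneg (gaussKernel_pos _).le]
  exact hle (x, y)

lemma integrable_snd_mul_gaussKernel_section (hα : 0 < α) (hβ : 0 < β) (hdet : γ ^ 2 < α * β)
    (hσ : σ ≠ 0) (x : ℝ) : Integrable fun y => y * gaussKernel α β γ σ (x, y) := by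
  obtain ⟨k, hk, hle⟩ := exists_gaussKernel_le hα hβ hdet hσ
  refine ((integrable_mul_exp_neg_mul_sq hk).norm.const_mul (exp (-k * x ^ 2))).mono'
    (by fun_prop) (ae_of_all _ fun y => ?_)
  rw [norm_mul, norm_of_nonneg (gaussKernel_pos _).le, norm_mul, norm_of_nonneg (exp_pos _).le,
    mul_left_comm]
  exact mul_le_mul_of_nonneg_left (hle (x, y)) (norm_nonneg _)

lemma integral_Ioi_linear_mul_gaussKernel_snd (hα : 0 < α) (hβ : 0 < β)
    (hdet : γ ^ 2 < α * β) (hσ : σ ≠ 0) (x b : ℝ) :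
    ∫ y in Ioi b, (β * y + γ * x) * gaussKernel α β γ σ (x, y)
      = σ ^ 2 * gaussKernel α β γ σ (x, b) := by
  have hderiv := fun y (_ : y ∈ Ici b) =>
    hasDerivAt_gaussKernel_snd (α := α) (β := β) (γ := γ) hσ x y
  have hK := integrable_gaussKernel_section hα hβ hdet hσ x
  have hint : Integrable fun y => (β * y + γ * x) * gaussKernel α β γ σ (x, y) := by
    refine ((integrable_snd_mul_gaussKernel_section hα hβ hdet hσ x).const_mul β).add
      (hK.const_mul (γ * x)) |>.congr (ae_of_all _ fun y => ?_)
    simp only [Pi.add_apply]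
    ring
  have hlim : Tendsto (fun y => -σ ^ 2 * gaussKernel α β γ σ (x, y)) atTop (𝓝 0) :=
    tendsto_zero_of_hasDerivAt_of_integrableOn_Ioi (a := b)
      (fun y hy => hderiv y (mem_Ici.2 (le_of_lt hy))) hint.integrableOn
      (hK.const_mul _).integrableOn
  rw [integral_Ioi_of_hasDerivAt_of_tendsto' hderiv hint.integrableOn hlim]
  ring

lemma mul_integral_fst_add_mul_integral_snd_gaussKernel (hα : 0 < α) (hβ : 0 < β)
    (hdet : γ ^ 2 < α * β) (hσ : 0 < σ) :
    α * (∫ p in wedge 0, p.1 * gaussKernel α β γ σ p)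
        + γ * ∫ p in wedge 0, p.2 * gaussKernel α β γ σ p
      = σ ^ 2 * (√(2 * π) * σ / (2 * √β) - √(2 * π) * σ / (2 * √(α + β + 2 * γ))) := by
  have hfst := (integrable_fst_mul_gaussKernel hα hβ hdet hσ.ne').integrableOn (s := wedge 0)
  have hsnd := (integrable_snd_mul_gaussKernel hα hβ hdet hσ.ne').integrableOn (s := wedge 0)
  have hδ := add_add_two_mul_pos hα hβ hdet
  rw [← integral_const_mul, ← integral_const_mul,
    ← integral_add (hfst.const_mul α) (hsnd.const_mul γ)]
  simp_rw [← mul_assoc, ← add_mul]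
  rw [setIntegral_wedge_eq_integral_Ioi_intervalIntegral
    (integrable_linear_mul_gaussKernel hα hβ hdet hσ.ne' α γ).integrableOn]
  simp_rw [integral_linear_mul_gaussKernel_fst hσ.ne', gaussKernel_zero_left, gaussKernel_diag]
  rw [integral_const_mul, integral_sub (integrable_exp_neg_mul_sq (by positivity)).integrableOn
      (integrable_exp_neg_mul_sq (by positivity)).integrableOn,
    integral_gaussian_Ioi_div_two_mul_sq hβ hσ, integral_gaussian_Ioi_div_two_mul_sq hδ hσ]

lemma mul_integral_snd_add_mul_integral_fst_gaussKernel (hα : 0 < α) (hβ : 0 < β)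
    (hdet : γ ^ 2 < α * β) (hσ : 0 < σ) :
    β * (∫ p in wedge 0, p.2 * gaussKernel α β γ σ p)
        + γ * ∫ p in wedge 0, p.1 * gaussKernel α β γ σ p
      = σ ^ 2 * (√(2 * π) * σ / (2 * √(α + β + 2 * γ))) := by
  have hfst := (integrable_fst_mul_gaussKernel hα hβ hdet hσ.ne').integrableOn (s := wedge 0)
  have hsnd := (integrable_snd_mul_gaussKernel hα hβ hdet hσ.ne').integrableOn (s := wedge 0)
  rw [← integral_const_mul, ← integral_const_mul,
    ← integral_add (hsnd.const_mul β) (hfst.const_mul γ)]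
  simp_rw [← mul_assoc, ← add_mul]
  rw [setIntegral_wedge_eq_integral_Ioi_Ioi
    ((integrable_linear_mul_gaussKernel hα hβ hdet hσ.ne' γ β).congr
      (ae_of_all _ fun p => by ring)).integrableOn]
  simp_rw [integral_Ioi_linear_mul_gaussKernel_snd hα hβ hdet hσ.ne', gaussKernel_diag]
  rw [integral_const_mul,
    integral_gaussian_Ioi_div_two_mul_sq (add_add_two_mul_pos hα hβ hdet) hσ]

end

theorem stmt_17 (α β γ σ : ℝ) (hα : 0 < α) (hβ : 0 < β) (hγ : α * β - γ ^ 2 > 0)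
    (hσ : 0 < σ) :
    ∫ y in Set.Ioi (0:ℝ), ∫ x in (0:ℝ)..y,
        x * Real.exp (-(α * x ^ 2 + β * y ^ 2 + 2 * γ * x * y) / (2 * σ ^ 2))
      = (Real.sqrt (2 * Real.pi) * σ ^ 3 / 2) * (β / (α * β - γ ^ 2))
          * (1 / Real.sqrt β - (β + γ) / (β * Real.sqrt (α + β + 2 * γ))) := by
  have hdet : γ ^ 2 < α * β := by linarith
  refine (setIntegral_wedge_eq_integral_Ioi_intervalIntegral
    (integrable_fst_mul_gaussKernel hα hβ hdet hσ.ne').integrableOn).symm.trans ?_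
  have hI := mul_integral_fst_add_mul_integral_snd_gaussKernel hα hβ hdet hσ
  have hII := mul_integral_snd_add_mul_integral_fst_gaussKernel hα hβ hdet hσ
  set J := ∫ p in wedge 0, p.1 * gaussKernel α β γ σ p
  set L := ∫ p in wedge 0, p.2 * gaussKernel α β γ σ p
  have hJ : (α * β - γ ^ 2) * J = σ ^ 2 * (β * (√(2 * π) * σ / (2 * √β))
      - (β + γ) * (√(2 * π) * σ / (2 * √(α + β + 2 * γ)))) := by
    linear_combination β * hI - γ * hII
  have hsβ : √β ≠ 0 := (sqrt_pos.2 hβ).ne'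
  have hsδ : √(α + β + 2 * γ) ≠ 0 := (sqrt_pos.2 (add_add_two_mul_pos hα hβ hdet)).ne'
  rw [eq_div_of_mul_eq hγ.ne' ((mul_comm _ _).trans hJ)]
  field_simp
end
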